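/- Fix ρ ∈ (−1,1), φ > 0. Define F(θ) = (2 e^{−θ/8}/(θφ)) · ∫_ℝ exp(−A_θ y² − (ρ/4) y √(y² + θ)) dy/√(2π) with A_θ = (1+ρ²)/8 + 2/(θ²φ²). Then F(θ) = e^{−θ/8}/√(1 + (1+ρ²)θ²φ²/16) · (1 + o(1)) as θ → 0⁺. -/

import Mathlib

/-!
Substituting `y = u / √(A θ)` turns the ratio into `π^{-1/2} ∫ exp(-u² - (ρ/4) x √(x² + θ)) du`
with `x = u / √(A θ)`. As `θ → 0⁺` we have `A θ → ∞`, so the perturbation `x √(x² + θ)` tends to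
`0` pointwise, and `|x √(x² + θ)| ≤ x² + θ / 2` bounds the integrand by `e^{1/2} e^{-u²/2}` once
`θ` is small. Dominated convergence then gives the limit `π^{-1/2} ∫ exp(-u²) du = 1`.
-/

open MeasureTheory Filter Real Topology

lemma abs_mul_sqrt_sq_add_le (x θ : ℝ) (hθ : 0 ≤ θ) : |x * √(x ^ 2 + θ)| ≤ x ^ 2 + θ / 2 := by
  have hs : √(x ^ 2 + θ) ^ 2 = x ^ 2 + θ := sq_sqrt (by positivity)
  rw [abs_mul, abs_of_nonneg (sqrt_nonneg _)]
  nlinarith [sq_nonneg (|x| - √(x ^ 2 + θ)), sq_abs x]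

lemma exp_neg_sq_sub_mul_sqrt_le {c t θ : ℝ} (u : ℝ) (hθ : 0 ≤ θ) (ht : |c| * t ^ 2 ≤ 1 / 2)
    (hcθ : |c| * θ ≤ 1) :
    exp (-u ^ 2 - c * (t * u) * √((t * u) ^ 2 + θ)) ≤ exp (1 / 2) * exp (-(1 / 2) * u ^ 2) := by
  rw [← exp_add, exp_le_exp]
  have hbound : |c * ((t * u) * √((t * u) ^ 2 + θ))| ≤ |c| * ((t * u) ^ 2 + θ / 2) := by
    rw [abs_mul]
    exact mul_le_mul_of_nonneg_left (abs_mul_sqrt_sq_add_le _ _ hθ) (abs_nonneg c)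
  nlinarith [neg_abs_le (c * ((t * u) * √((t * u) ^ 2 + θ))), sq_nonneg u]

lemma tendsto_integral_exp_neg_sq_sub_mul_sqrt {α : Type*} {l : Filter α}
    [l.IsCountablyGenerated] (c : ℝ) {t θ : α → ℝ} (ht : Tendsto t l (𝓝 0))
    (hθ : Tendsto θ l (𝓝 0)) (hθ0 : ∀ᶠ a in l, 0 ≤ θ a) :
    Tendsto (fun a ↦ ∫ u, exp (-u ^ 2 - c * (t a * u) * √((t a * u) ^ 2 + θ a))) l (𝓝 √π) := by
  have hgauss : ∫ u : ℝ, exp (-u ^ 2) = √π := by simpa using integral_gaussian 1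
  rw [← hgauss]
  have ht_small : ∀ᶠ a in l, |c| * t a ^ 2 < 1 / 2 :=
    ((ht.pow 2).const_mul |c|).eventually_lt_const (by norm_num)
  have hθ_small : ∀ᶠ a in l, |c| * θ a < 1 :=
    (hθ.const_mul |c|).eventually_lt_const (by norm_num)
  refine tendsto_integral_filter_of_dominated_convergence
    (fun u ↦ exp (1 / 2) * exp (-(1 / 2) * u ^ 2))
    (.of_forall fun a ↦ by fun_prop) ?_
    ((integrable_exp_neg_mul_sq (by norm_num)).const_mul _) ?_
  · filter_upwards [hθ0, ht_small, hθ_small] with a hθa hta hθa'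
    refine .of_forall fun u ↦ ?_
    rw [norm_of_nonneg (exp_pos _).le]
    exact exp_neg_sq_sub_mul_sqrt_le u hθa hta.le hθa'.le
  · refine .of_forall fun u ↦ ?_
    have hcont : Continuous fun p : ℝ × ℝ ↦
        exp (-u ^ 2 - c * (p.1 * u) * √((p.1 * u) ^ 2 + p.2)) := by fun_prop
    simpa [Function.comp_def] using (hcont.tendsto (0, 0)).comp (ht.prodMk_nhds hθ)

lemma integral_exp_neg_mul_sq_sub_mul_sqrt {a : ℝ} (ha : 0 < a) (c θ : ℝ) :
    ∫ y, exp (-a * y ^ 2 - c * y * √(y ^ 2 + θ))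
      = (√a)⁻¹ * ∫ u, exp (-u ^ 2 - c * ((√a)⁻¹ * u) * √(((√a)⁻¹ * u) ^ 2 + θ)) := by
  have hsq : √a ^ 2 = a := sq_sqrt ha.le
  have hpos : 0 < √a := sqrt_pos.mpr ha
  have hscale (u : ℝ) : -a * ((√a)⁻¹ * u) ^ 2 = -u ^ 2 := by
    rw [mul_pow, inv_pow, hsq]; field_simp
  simp_rw [← hscale]
  rw [Measure.integral_comp_inv_mul_left (fun y ↦ exp (-a * y ^ 2 - c * y * √(y ^ 2 + θ))),
    abs_of_pos hpos, smul_eq_mul, inv_mul_cancel_left₀ hpos.ne']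

lemma two_div_mul_sqrt_eq_sqrt_two_mul_sqrt {x : ℝ} (hx : 0 < x) (ρ : ℝ) :
    2 / x * √(1 + (1 + ρ ^ 2) * x ^ 2 / 16) = √2 * √((1 + ρ ^ 2) / 8 + 2 / x ^ 2) := by
  have hfac : 2 * ((1 + ρ ^ 2) / 8 + 2 / x ^ 2) = (2 / x) ^ 2 * (1 + (1 + ρ ^ 2) * x ^ 2 / 16) := by
    field_simp; ring
  rw [← sqrt_mul zero_le_two, hfac, sqrt_mul (sq_nonneg _), sqrt_sq (by positivity)]

lemma tendsto_const_add_div_sq_atTop (a : ℝ) {b : ℝ} (hb : 0 < b) :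
    Tendsto (fun x : ℝ ↦ a + b / x ^ 2) (𝓝[>] 0) atTop := by
  simp_rw [div_eq_mul_inv, ← inv_pow]
  exact tendsto_atTop_add_const_left _ _ <| Tendsto.const_mul_atTop hb <|
    (tendsto_pow_atTop two_ne_zero).comp tendsto_inv_nhdsGT_zero

theorem vol_swap_asymptotic_formula_general
    (ρ φ : ℝ) (hφ : 0 < φ)
    (A : ℝ → ℝ) (hA : ∀ θ, A θ = (1 + ρ^2) / 8 + 2 / (θ^2 * φ^2))
    (F : ℝ → ℝ)
    (hF : ∀ θ, F θ = (2 * Real.exp (-θ / 8) / (θ * φ)) *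
        ∫ y : ℝ, Real.exp (-(A θ) * y^2 - (ρ / 4) * y * Real.sqrt (y^2 + θ)) / Real.sqrt (2 * Real.pi)) :
    Filter.Tendsto
      (fun θ => F θ / (Real.exp (-θ / 8) / Real.sqrt (1 + (1 + ρ^2) * θ^2 * φ^2 / 16)))
      (nhdsWithin 0 (Set.Ioi 0)) (nhds 1) := by
  have hA_pos (θ : ℝ) : 0 < A θ := by rw [hA]; positivity
  have hA_top : Tendsto A (𝓝[>] 0) atTop := by
    have hA' : A = fun θ ↦ (1 + ρ ^ 2) / 8 + 2 / φ ^ 2 / θ ^ 2 := by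
      funext θ; rw [hA]; field_simp
    exact hA' ▸ tendsto_const_add_div_sq_atTop _ (by positivity)
  have hlim := (tendsto_integral_exp_neg_sq_sub_mul_sqrt (ρ / 4)
    (tendsto_inv_atTop_zero.comp (tendsto_sqrt_atTop.comp hA_top))
    (tendsto_id.mono_left nhdsWithin_le_nhds)
    (eventually_mem_nhdsWithin.mono fun _ h ↦ le_of_lt h)).const_mul (√π)⁻¹
  rw [inv_mul_cancel₀ (sqrt_pos.mpr pi_pos).ne'] at hlim
  refine hlim.congr' ?_
  filter_upwards [self_mem_nhdsWithin] with θ (hθ : 0 < θ)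
  have hscale := two_div_mul_sqrt_eq_sqrt_two_mul_sqrt (mul_pos hθ hφ) ρ
  rw [mul_pow, ← mul_assoc, ← hA] at hscale
  rw [hF, integral_div, integral_exp_neg_mul_sq_sub_mul_sqrt (hA_pos θ), sqrt_mul zero_le_two]
  have hS : 0 < √(1 + (1 + ρ ^ 2) * θ ^ 2 * φ ^ 2 / 16) := sqrt_pos.mpr (by positivity)
  have hAs : 0 < √(A θ) := sqrt_pos.mpr (hA_pos θ)
  have hratio (J : ℝ) : (√π)⁻¹ * J = 2 * exp (-θ / 8) / (θ * φ) * ((√(A θ))⁻¹ * J / (√2 * √π)) /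
      (exp (-θ / 8) / √(1 + (1 + ρ ^ 2) * θ ^ 2 * φ ^ 2 / 16)) := by
    generalize √(1 + (1 + ρ ^ 2) * θ ^ 2 * φ ^ 2 / 16) = S at hS hscale ⊢
    generalize √(A θ) = a at hAs hscale ⊢
    field_simp at hscale ⊢
    linear_combination (-J) * hscale
  exact hratio _

theorem vol_swap_asymptotic_formula
    (ρ φ : ℝ) (hρ : ρ ∈ Set.Ioo (-1:ℝ) 1) (hφ : 0 < φ)
    (A : ℝ → ℝ) (hA : ∀ θ, A θ = (1 + ρ^2) / 8 + 2 / (θ^2 * φ^2))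
    (F : ℝ → ℝ)
    (hF : ∀ θ, F θ = (2 * Real.exp (-θ / 8) / (θ * φ)) *
        ∫ y : ℝ, Real.exp (-(A θ) * y^2 - (ρ / 4) * y * Real.sqrt (y^2 + θ)) / Real.sqrt (2 * Real.pi)) :
    Filter.Tendsto
      (fun θ => F θ / (Real.exp (-θ / 8) / Real.sqrt (1 + (1 + ρ^2) * θ^2 * φ^2 / 16)))
      (nhdsWithin 0 (Set.Ioi 0)) (nhds 1) :=
  vol_swap_asymptotic_formula_general ρ φ hφ A hA F hF
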